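/- arXiv:1404.2984 — 5 statements merged into one kernel-verified Lean document; each statement's English description precedes it below -/
import Mathlib

section
/- Let R be a finite subset of (Fin n → ZMod 2), let w be a weight function with w(y) ∈ (0,1] for all y ∈ R, and write w(A) = Σ_{y∈A} w(y). Let 0 < ε ≤ 1 and let i ≥ 1 be an integer such that 2^{-i} · w(R) ≥ e^{3/2} · (1 + 1/ε)². Then for every fixed α ∈ (Fin i → ZMod 2), if h is chosen uniformly at random from H_xor(n, i), then Pr[ (1+ε)^{-1} · w(R) ≤ 2^{i} · w(R ∩ h^{-1}(α)) ≤ (1+ε) · w(R) ] ≥ 1 − e^{-3/2}. -/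
open scoped Classical

/-- The XOR hash family `H_xor(n, m)`: for coefficients
`a i = (a_{i,0}, (a_{i,1}, …, a_{i,n}))`, the hash of `y` has `i`-th component
`a_{i,0} + Σ_l a_{i,l}·y_l` over `ZMod 2`. -/
def hashXor (n m : ℕ) (a : Fin m → ZMod 2 × (Fin n → ZMod 2))
    (y : Fin n → ZMod 2) : Fin m → ZMod 2 :=
  fun j => (a j).1 + ∑ l, (a j).2 l * y l


private lemma sum_update_mul {n : ℕ} (b : Fin n → ZMod 2) (l0 : Fin n) (c : ZMod 2)
    (v : Fin n → ZMod 2) :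
    ∑ l, Function.update b l0 c l * v l = c * v l0 + ∑ l ∈ Finset.univ.erase l0, b l * v l := by
  rw [← Finset.add_sum_erase _ (fun l => Function.update b l0 c l * v l) (Finset.mem_univ l0)]
  simp only [Function.update_self]
  congr 1
  apply Finset.sum_congr rfl
  intro l hl
  rw [Function.update_of_ne (Finset.ne_of_mem_erase hl)]

private lemma card_kernel {n : ℕ} (y z : Fin n → ZMod 2) (hyz : y ≠ z) :
    2 * (Finset.univ.filter
      (fun b : Fin n → ZMod 2 => ∑ l, b l * y l = ∑ l, b l * z l)).card = 2 ^ n := by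
  obtain ⟨l0, hl0⟩ : ∃ l0, y l0 ≠ z l0 := by
    by_contra h; push_neg at h; exact hyz (funext h)
  set p : (Fin n → ZMod 2) → Prop := fun b => ∑ l, b l * y l = ∑ l, b l * z l with hp
  have key : ∀ b : Fin n → ZMod 2,
      (p (Function.update b l0 (b l0 + 1)) ↔ ¬ p b) := by
    intro b
    have hy := sum_update_mul b l0 (b l0 + 1) y
    have hz := sum_update_mul b l0 (b l0 + 1) z
    have hy' := Finset.add_sum_erase Finset.univ (fun l => b l * y l) (Finset.mem_univ l0)
    have hz' := Finset.add_sum_erase Finset.univ (fun l => b l * z l) (Finset.mem_univ l0)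
    simp only [hp]
    rw [hy, hz, ← hy', ← hz']
    have : ∀ u v a c d : ZMod 2, u ≠ v →
        ((a + 1) * u + c = (a + 1) * v + d ↔ ¬ (a * u + c = a * v + d)) := by decide
    exact this _ _ _ _ _ hl0
  have hinv : ∀ b : Fin n → ZMod 2,
      Function.update (Function.update b l0 (b l0 + 1)) l0
        ((Function.update b l0 (b l0 + 1)) l0 + 1) = b := by
    intro b
    rw [Function.update_self, Function.update_idem]
    have h2 : ∀ x : ZMod 2, x + 1 + 1 = x := by decide
    rw [h2, Function.update_eq_self]
  have hcard : (Finset.univ.filter p).card = (Finset.univ.filter (fun b => ¬ p b)).card := by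
    refine Finset.card_bij' (fun b _ => Function.update b l0 (b l0 + 1))
      (fun b _ => Function.update b l0 (b l0 + 1)) ?_ ?_ ?_ ?_
    · intro b hb
      simp only [Finset.mem_filter, Finset.mem_univ, true_and] at hb ⊢
      exact fun h => ((key b).1 h) hb
    · intro b hb
      simp only [Finset.mem_filter, Finset.mem_univ, true_and] at hb ⊢
      exact (key b).2 hb
    · intro b _; exact hinv b
    · intro b _; exact hinv b
  have htot := Finset.card_filter_add_card_filter_not
    (s := (Finset.univ : Finset (Fin n → ZMod 2))) p
  rw [Finset.card_univ] at htot
  have hcf : Fintype.card (Fin n → ZMod 2) = 2 ^ n := by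
    rw [Fintype.card_fun, ZMod.card, Fintype.card_fin]
  rw [hcf] at htot
  rw [show (Finset.filter (fun b : Fin n → ZMod 2 => ∑ l, b l * y l = ∑ l, b l * z l) Finset.univ) = Finset.filter p Finset.univ from rfl]
  omega

private lemma card_single {n : ℕ} (y : Fin n → ZMod 2) (c : ZMod 2) :
    (Finset.univ.filter (fun x : ZMod 2 × (Fin n → ZMod 2) =>
      x.1 + ∑ l, x.2 l * y l = c)).card = 2 ^ n := by
  have : (Finset.univ.filter (fun x : ZMod 2 × (Fin n → ZMod 2) =>
      x.1 + ∑ l, x.2 l * y l = c)).card = (Finset.univ : Finset (Fin n → ZMod 2)).card := by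
    refine Finset.card_bij' (fun x _ => x.2) (fun b _ => (c - ∑ l, b l * y l, b)) ?_ ?_ ?_ ?_
    · intro x _; exact Finset.mem_univ _
    · intro b _
      simp only [Finset.mem_filter, Finset.mem_univ, true_and]
      exact sub_add_cancel _ _
    · intro x hx
      simp only [Finset.mem_filter, Finset.mem_univ, true_and] at hx
      exact Prod.ext (eq_sub_of_add_eq hx).symm rfl
    · intro b _; rfl
  rw [this, Finset.card_univ, Fintype.card_fun, ZMod.card, Fintype.card_fin]

private lemma card_pair {n : ℕ} (y z : Fin n → ZMod 2) (hyz : y ≠ z) (c : ZMod 2) :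
    2 * (Finset.univ.filter (fun x : ZMod 2 × (Fin n → ZMod 2) =>
      x.1 + ∑ l, x.2 l * y l = c ∧ x.1 + ∑ l, x.2 l * z l = c)).card = 2 ^ n := by
  have hb : (Finset.univ.filter (fun x : ZMod 2 × (Fin n → ZMod 2) =>
      x.1 + ∑ l, x.2 l * y l = c ∧ x.1 + ∑ l, x.2 l * z l = c)).card
      = (Finset.univ.filter
          (fun b : Fin n → ZMod 2 => ∑ l, b l * y l = ∑ l, b l * z l)).card := by
    refine Finset.card_bij' (fun x _ => x.2) (fun b _ => (c - ∑ l, b l * y l, b)) ?_ ?_ ?_ ?_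
    · intro x hx
      simp only [Finset.mem_filter, Finset.mem_univ, true_and] at hx ⊢
      obtain ⟨h1, h2⟩ := hx
      have := h1.trans h2.symm
      exact add_left_cancel this
    · intro b hb
      simp only [Finset.mem_filter, Finset.mem_univ, true_and] at hb ⊢
      constructor
      · exact sub_add_cancel _ _
      · rw [← hb]; exact sub_add_cancel _ _
    · intro x hx
      simp only [Finset.mem_filter, Finset.mem_univ, true_and] at hx
      exact Prod.ext (eq_sub_of_add_eq hx.1).symm rfl
    · intro b _; rfl
  rw [hb, card_kernel y z hyz]

private lemma card_filter_pi {i : ℕ} {P : Type*} [Fintype P]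
    (p : Fin i → P → Prop) [∀ j x, Decidable (p j x)] :
    (Finset.univ.filter (fun a : Fin i → P => ∀ j, p j (a j))).card
      = ∏ j, (Finset.univ.filter (fun x => p j x)).card := by
  rw [← Fintype.card_subtype]
  rw [Fintype.card_congr (Equiv.subtypePiEquivPi (p := p))]
  rw [Fintype.card_pi]
  exact Finset.prod_congr rfl (fun j _ => Fintype.card_subtype _)

private lemma card_hash_single (n i : ℕ) (α : Fin i → ZMod 2) (y : Fin n → ZMod 2) :
    (Finset.univ.filter (fun a : Fin i → ZMod 2 × (Fin n → ZMod 2) =>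
      hashXor n i a y = α)).card = (2 ^ n) ^ i := by
  have hiff : ∀ a : Fin i → ZMod 2 × (Fin n → ZMod 2),
      hashXor n i a y = α ↔ ∀ j, (a j).1 + ∑ l, (a j).2 l * y l = α j := by
    intro a; rw [funext_iff]; exact Iff.rfl
  rw [Finset.filter_congr (fun a _ => hiff a)]
  rw [card_filter_pi (p := fun j (x : ZMod 2 × (Fin n → ZMod 2)) =>
      x.1 + ∑ l, x.2 l * y l = α j)]
  simp [card_single]

private lemma card_hash_pair (n i : ℕ) (α : Fin i → ZMod 2) (y z : Fin n → ZMod 2)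
    (hyz : y ≠ z) :
    2 ^ i * (Finset.univ.filter (fun a : Fin i → ZMod 2 × (Fin n → ZMod 2) =>
      hashXor n i a y = α ∧ hashXor n i a z = α)).card = (2 ^ n) ^ i := by
  have hiff : ∀ a : Fin i → ZMod 2 × (Fin n → ZMod 2),
      (hashXor n i a y = α ∧ hashXor n i a z = α) ↔
        ∀ j, (a j).1 + ∑ l, (a j).2 l * y l = α j ∧ (a j).1 + ∑ l, (a j).2 l * z l = α j := by
    intro a
    rw [funext_iff (f := hashXor n i a y), funext_iff (f := hashXor n i a z)]
    exact ⟨fun ⟨h1, h2⟩ j => ⟨h1 j, h2 j⟩, fun h => ⟨fun j => (h j).1, fun j => (h j).2⟩⟩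
  rw [Finset.filter_congr (fun a _ => hiff a)]
  rw [card_filter_pi (p := fun j (x : ZMod 2 × (Fin n → ZMod 2)) =>
      x.1 + ∑ l, x.2 l * y l = α j ∧ x.1 + ∑ l, x.2 l * z l = α j)]
  have h2i : (2:ℕ) ^ i = ∏ _j : Fin i, 2 := by
    rw [Finset.prod_const, Finset.card_univ, Fintype.card_fin]
  rw [h2i, ← Finset.prod_mul_distrib]
  rw [show ((2:ℕ) ^ n) ^ i = ∏ _j : Fin i, 2 ^ n by
    rw [Finset.prod_const, Finset.card_univ, Fintype.card_fin]]
  exact Finset.prod_congr rfl (fun j _ => card_pair y z hyz (α j))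

set_option maxHeartbeats 1000000

/-- If `2^{-i}·w(R) ≥ e^{3/2}·(1+1/ε)²`, then with probability at least `1 − e^{-3/2}`
over a random XOR hash `h`, the scaled cell weight `2^i·w(R ∩ h⁻¹(α))` is within a
`(1+ε)` factor of `w(R)`. -/
theorem hashXor_cell_weight_concentration
    (n i : ℕ) (hn : 1 ≤ n) (hi : 1 ≤ i)
    (R : Finset (Fin n → ZMod 2)) (w : (Fin n → ZMod 2) → ℝ)
    (hw : ∀ y ∈ R, w y ∈ Set.Ioc (0 : ℝ) 1)
    (ε : ℝ) (hε0 : 0 < ε) (hε1 : ε ≤ 1)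
    (hpiv : Real.exp (3 / 2) * (1 + 1 / ε) ^ 2 ≤ (2 : ℝ) ^ (-(i : ℤ)) * ∑ y ∈ R, w y)
    (α : Fin i → ZMod 2) :
    1 - Real.exp (-(3 / 2)) ≤
      ((Finset.univ.filter
          (fun a : Fin i → ZMod 2 × (Fin n → ZMod 2) =>
            (1 + ε)⁻¹ * (∑ y ∈ R, w y) ≤
              (2 : ℝ) ^ i * ∑ y ∈ R.filter (fun y => hashXor n i a y = α), w y ∧
            (2 : ℝ) ^ i * (∑ y ∈ R.filter (fun y => hashXor n i a y = α), w y) ≤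
              (1 + ε) * ∑ y ∈ R, w y)).card : ℝ) /
        (Fintype.card (Fin i → ZMod 2 × (Fin n → ZMod 2)) : ℝ) := by
  classical
  obtain ⟨W, hWdef⟩ : ∃ x : ℝ, x = ∑ y ∈ R, w y := ⟨_, rfl⟩
  rw [← hWdef] at hpiv ⊢
  obtain ⟨S, hSdef⟩ : ∃ S : (Fin i → ZMod 2 × (Fin n → ZMod 2)) → ℝ,
      S = fun a => ∑ y ∈ R.filter (fun y => hashXor n i a y = α), w y := ⟨_, rfl⟩
  have h2i : (0:ℝ) < 2 ^ i := by positivity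
  obtain ⟨D, hDdef⟩ : ∃ x : ℝ, x = ((2:ℝ) ^ n) ^ i := ⟨_, rfl⟩
  have hD0 : 0 < D := by rw [hDdef]; positivity
  set N := Fintype.card (Fin i → ZMod 2 × (Fin n → ZMod 2)) with hNdef
  have hN : (N : ℝ) = 2 ^ i * D := by
    rw [hDdef, hNdef, Fintype.card_fun, Fintype.card_prod, ZMod.card, Fintype.card_fun,
      ZMod.card, Fintype.card_fin, Fintype.card_fin]
    push_cast
    rw [mul_pow]
  have hN0 : (0:ℝ) < N := by rw [hN]; positivity
  -- counting facts, real versions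
  have cD : ∀ y : Fin n → ZMod 2,
      (((Finset.univ.filter (fun a : Fin i → ZMod 2 × (Fin n → ZMod 2) =>
        hashXor n i a y = α)).card : ℝ)) = D := by
    intro y
    rw [card_hash_single n i α y, hDdef]
    push_cast
    rfl
  have cK : ∀ y z : Fin n → ZMod 2, y ≠ z →
      (((Finset.univ.filter (fun a : Fin i → ZMod 2 × (Fin n → ZMod 2) =>
        hashXor n i a y = α ∧ hashXor n i a z = α)).card : ℝ)) = D / 2 ^ i := by
    intro y z hyz
    have h := card_hash_pair n i α y z hyz
    have h' : ((2:ℝ) ^ i) * ((Finset.univ.filter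
        (fun a : Fin i → ZMod 2 × (Fin n → ZMod 2) =>
          hashXor n i a y = α ∧ hashXor n i a z = α)).card : ℝ) = D := by
      rw [hDdef]
      exact_mod_cast congrArg (Nat.cast : ℕ → ℝ) h
    field_simp
    linarith [h']
  -- first moment
  have hiteform : ∀ a, S a = ∑ y ∈ R, if hashXor n i a y = α then w y else 0 := by
    intro a; rw [hSdef]; exact Finset.sum_filter _ _
  have hsum1 : (∑ a : Fin i → ZMod 2 × (Fin n → ZMod 2), S a) = W * D := by
    calc (∑ a : Fin i → ZMod 2 × (Fin n → ZMod 2), S a)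
        = ∑ a : Fin i → ZMod 2 × (Fin n → ZMod 2),
            ∑ y ∈ R, if hashXor n i a y = α then w y else 0 :=
          Finset.sum_congr rfl fun a _ => hiteform a
      _ = ∑ y ∈ R, ∑ a : Fin i → ZMod 2 × (Fin n → ZMod 2),
            if hashXor n i a y = α then w y else 0 := Finset.sum_comm
      _ = ∑ y ∈ R, D * w y := by
          refine Finset.sum_congr rfl fun y _ => ?_
          rw [← Finset.sum_filter, Finset.sum_const, nsmul_eq_mul, cD y]
      _ = W * D := by rw [← Finset.mul_sum, ← hWdef]; ring
  -- second moment
  obtain ⟨Q, hQdef⟩ : ∃ x : ℝ, x = ∑ y ∈ R, (w y) ^ 2 := ⟨_, rfl⟩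
  have hQ0 : 0 ≤ Q := hQdef ▸ Finset.sum_nonneg fun y _ => sq_nonneg _
  have hQle : Q ≤ W := by
    rw [hQdef, hWdef]
    refine Finset.sum_le_sum fun y hy => ?_
    have h1 := (hw y hy).1
    have h2 := (hw y hy).2
    nlinarith
  have hsum2 : (∑ a : Fin i → ZMod 2 × (Fin n → ZMod 2), (S a) ^ 2)
      = D * Q + (D / 2 ^ i) * (W ^ 2 - Q) := by
    have expand : ∀ a : Fin i → ZMod 2 × (Fin n → ZMod 2), (S a) ^ 2
        = ∑ y ∈ R, ∑ z ∈ R,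
            (if hashXor n i a y = α ∧ hashXor n i a z = α then w y * w z else 0) := by
      intro a
      rw [hiteform a, sq, Finset.sum_mul_sum]
      refine Finset.sum_congr rfl fun y _ => Finset.sum_congr rfl fun z _ => ?_
      by_cases hy : hashXor n i a y = α <;> by_cases hz : hashXor n i a z = α <;>
        simp [hy, hz]
    calc (∑ a : Fin i → ZMod 2 × (Fin n → ZMod 2), (S a) ^ 2)
        = ∑ a : Fin i → ZMod 2 × (Fin n → ZMod 2), ∑ y ∈ R, ∑ z ∈ R,
            (if hashXor n i a y = α ∧ hashXor n i a z = α then w y * w z else 0) :=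
          Finset.sum_congr rfl fun a _ => expand a
      _ = ∑ y ∈ R, ∑ a : Fin i → ZMod 2 × (Fin n → ZMod 2), ∑ z ∈ R,
            (if hashXor n i a y = α ∧ hashXor n i a z = α then w y * w z else 0) :=
          Finset.sum_comm
      _ = ∑ y ∈ R, ∑ z ∈ R, ∑ a : Fin i → ZMod 2 × (Fin n → ZMod 2),
            (if hashXor n i a y = α ∧ hashXor n i a z = α then w y * w z else 0) :=
          Finset.sum_congr rfl fun y _ => Finset.sum_comm
      _ = ∑ y ∈ R, ∑ z ∈ R,
            ((Finset.univ.filter (fun a : Fin i → ZMod 2 × (Fin n → ZMod 2) =>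
              hashXor n i a y = α ∧ hashXor n i a z = α)).card : ℝ) * (w y * w z) := by
          refine Finset.sum_congr rfl fun y _ => Finset.sum_congr rfl fun z _ => ?_
          rw [← Finset.sum_filter, Finset.sum_const, nsmul_eq_mul]
      _ = ∑ y ∈ R, (D * (w y) ^ 2 + (D / 2 ^ i) * ∑ z ∈ R.erase y, w y * w z) := by
          refine Finset.sum_congr rfl fun y hy => ?_
          rw [← Finset.add_sum_erase _ _ hy]
          congr 1
          · have hfc : (Finset.univ.filter (fun a : Fin i → ZMod 2 × (Fin n → ZMod 2) =>
                hashXor n i a y = α ∧ hashXor n i a y = α))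
                = (Finset.univ.filter (fun a : Fin i → ZMod 2 × (Fin n → ZMod 2) =>
                hashXor n i a y = α)) := Finset.filter_congr fun a _ => and_self_iff
            rw [hfc, cD y]; ring
          · rw [Finset.mul_sum]
            refine Finset.sum_congr rfl fun z hz => ?_
            rw [cK y z (Finset.ne_of_mem_erase hz).symm]
      _ = D * Q + (D / 2 ^ i) * (W ^ 2 - Q) := by
          rw [Finset.sum_add_distrib, ← Finset.mul_sum, ← Finset.mul_sum, ← hQdef]
          congr 1
          have herase : ∀ y ∈ R, (∑ z ∈ R.erase y, w y * w z) = w y * W - (w y) ^ 2 := by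
            intro y hy
            rw [← Finset.mul_sum, Finset.sum_erase_eq_sub hy, ← hWdef]
            ring
          rw [Finset.sum_congr rfl herase, Finset.sum_sub_distrib, ← Finset.sum_mul, ← hWdef,
            ← hQdef]
          ring
  -- the mean
  obtain ⟨μ, hμdef⟩ : ∃ x : ℝ, x = W / 2 ^ i := ⟨_, rfl⟩
  have hμpiv : Real.exp (3 / 2) * (1 + 1 / ε) ^ 2 ≤ μ := by
    have h : (2:ℝ) ^ (-(i:ℤ)) * W = μ := by
      rw [hμdef, zpow_neg, zpow_natCast]; ring
    rw [← h]; exact hpiv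
  have hμpos : 0 < μ := lt_of_lt_of_le (by positivity) hμpiv
  have hW0 : 0 < W := by
    have h : μ * 2 ^ i = W := by rw [hμdef]; field_simp
    rw [← h]; positivity
  have hNμ : (N:ℝ) * μ = D * W := by rw [hN, hμdef]; field_simp
  -- variance bound
  have hvar : (∑ a : Fin i → ZMod 2 × (Fin n → ZMod 2), (S a - μ) ^ 2) ≤ D * W := by
    have expand : (∑ a : Fin i → ZMod 2 × (Fin n → ZMod 2), (S a - μ) ^ 2)
        = (∑ a : Fin i → ZMod 2 × (Fin n → ZMod 2), (S a) ^ 2)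
          - 2 * μ * (∑ a : Fin i → ZMod 2 × (Fin n → ZMod 2), S a) + N * μ ^ 2 := by
      rw [Finset.sum_congr rfl (fun (a : Fin i → ZMod 2 × (Fin n → ZMod 2)) _ =>
        (by ring : (S a - μ) ^ 2 = (S a) ^ 2 - 2 * μ * S a + μ ^ 2)),
        Finset.sum_add_distrib, Finset.sum_sub_distrib, ← Finset.mul_sum,
        Finset.sum_const, Finset.card_univ, nsmul_eq_mul, ← hNdef]
    rw [expand, hsum1, hsum2, hN, hμdef]
    have key : D * Q + D / 2 ^ i * (W ^ 2 - Q) - 2 * (W / 2 ^ i) * (W * D)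
        + 2 ^ i * D * (W / 2 ^ i) ^ 2 = D * Q - (D / 2 ^ i) * Q := by
      field_simp
      ring
    rw [key]
    have h1 : 0 ≤ (D / 2 ^ i) * Q := by positivity
    nlinarith [hQle, hD0]
  -- Chebyshev
  have hε1' : (0:ℝ) < 1 + ε := by linarith
  obtain ⟨t, htdef⟩ : ∃ x : ℝ, x = ε * μ / (1 + ε) := ⟨_, rfl⟩
  have ht0 : 0 < t := by rw [htdef]; positivity
  set B := Finset.univ.filter
    (fun a : Fin i → ZMod 2 × (Fin n → ZMod 2) => t < |S a - μ|) with hBdef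
  have hcheb : (B.card : ℝ) * t ^ 2 ≤ D * W := by
    calc (B.card : ℝ) * t ^ 2 = ∑ _a ∈ B, t ^ 2 := by
          rw [Finset.sum_const, nsmul_eq_mul]
      _ ≤ ∑ a ∈ B, (S a - μ) ^ 2 := by
          refine Finset.sum_le_sum fun a ha => ?_
          have h := (Finset.mem_filter.mp ha).2
          nlinarith [abs_nonneg (S a - μ), sq_abs (S a - μ)]
      _ ≤ ∑ a : Fin i → ZMod 2 × (Fin n → ZMod 2), (S a - μ) ^ 2 :=
          Finset.sum_le_sum_of_subset_of_nonneg (Finset.filter_subset _ _)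
            (fun a _ _ => sq_nonneg _)
      _ ≤ D * W := hvar
  obtain ⟨E, hEdef⟩ : ∃ x : ℝ, x = Real.exp (3 / 2) := ⟨_, rfl⟩
  rw [← hEdef] at hμpiv
  have hE0 : 0 < E := hEdef ▸ Real.exp_pos _
  have hBcard : (B.card : ℝ) * E ≤ N := by
    have ht2 : t ^ 2 * (1 + ε) ^ 2 = ε ^ 2 * μ ^ 2 := by
      rw [htdef]; field_simp
    have h1 : (B.card : ℝ) * (ε ^ 2 * μ ^ 2) ≤ (N * μ) * (1 + ε) ^ 2 := by
      have hh := mul_le_mul_of_nonneg_right hcheb (sq_nonneg (1 + ε))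
      calc (B.card : ℝ) * (ε ^ 2 * μ ^ 2) = (B.card : ℝ) * t ^ 2 * (1 + ε) ^ 2 := by
            rw [mul_assoc, ht2]
        _ ≤ D * W * (1 + ε) ^ 2 := hh
        _ = (N * μ) * (1 + ε) ^ 2 := by rw [hNμ]
    have hpiv' : E * (1 + ε) ^ 2 ≤ μ * ε ^ 2 := by
      have heps : (1 + 1 / ε) ^ 2 * ε ^ 2 = (1 + ε) ^ 2 := by field_simp; ring
      calc E * (1 + ε) ^ 2 = (E * (1 + 1 / ε) ^ 2) * ε ^ 2 := by rw [mul_assoc, heps]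
        _ ≤ μ * ε ^ 2 := mul_le_mul_of_nonneg_right hμpiv (sq_nonneg ε)
    have p1 : (B.card : ℝ) * (ε ^ 2 * μ ^ 2) * E ≤ (N * μ) * (1 + ε) ^ 2 * E :=
      mul_le_mul_of_nonneg_right h1 hE0.le
    have p2 : (N * μ) * (E * (1 + ε) ^ 2) ≤ (N * μ) * (μ * ε ^ 2) :=
      mul_le_mul_of_nonneg_left hpiv' (by positivity)
    have p3 : (B.card : ℝ) * E * (ε ^ 2 * μ ^ 2) ≤ N * (ε ^ 2 * μ ^ 2) := by linarith [p1, p2]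
    exact le_of_mul_le_mul_right p3 (by positivity)
  -- good set
  have hsubset : Finset.univ.filter
      (fun a : Fin i → ZMod 2 × (Fin n → ZMod 2) => ¬ t < |S a - μ|) ⊆
      Finset.univ.filter
        (fun a : Fin i → ZMod 2 × (Fin n → ZMod 2) =>
          (1 + ε)⁻¹ * W ≤ (2 : ℝ) ^ i * ∑ y ∈ R.filter (fun y => hashXor n i a y = α), w y ∧
          (2 : ℝ) ^ i * (∑ y ∈ R.filter (fun y => hashXor n i a y = α), w y) ≤ (1 + ε) * W) := by
    intro a ha
    simp only [Finset.mem_filter, Finset.mem_univ, true_and, not_lt] at ha ⊢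
    have hSa : S a = ∑ y ∈ R.filter (fun y => hashXor n i a y = α), w y := by
      rw [hSdef]
    rw [← hSa]
    have habs := abs_le.mp ha
    have h1 : μ - t ≤ S a := by linarith [habs.1]
    have h2 : S a ≤ μ + t := by linarith [habs.2]
    have hμt1 : μ - t = μ / (1 + ε) := by rw [htdef]; field_simp; ring
    have hμt2 : μ + t ≤ (1 + ε) * μ := by
      have ht' : t ≤ ε * μ := by
        rw [htdef, div_le_iff₀ hε1']
        nlinarith [mul_nonneg (mul_nonneg hε0.le hμpos.le) hε0.le]
      linarith
    have h2iμ : (2:ℝ) ^ i * μ = W := by rw [hμdef]; field_simp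
    constructor
    · have heq : (1 + ε)⁻¹ * W = 2 ^ i * (μ / (1 + ε)) := by
        rw [← h2iμ]; field_simp
      rw [heq]
      have h1' : μ / (1 + ε) ≤ S a := by rw [← hμt1]; exact h1
      exact mul_le_mul_of_nonneg_left h1' h2i.le
    · have heq : (1 + ε) * W = 2 ^ i * ((1 + ε) * μ) := by rw [← h2iμ]; ring
      rw [heq]
      exact mul_le_mul_of_nonneg_left (le_trans h2 hμt2) h2i.le
  -- conclusion
  have hcards := Finset.card_filter_add_card_filter_not
    (s := (Finset.univ : Finset (Fin i → ZMod 2 × (Fin n → ZMod 2))))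
    (p := fun a => t < |S a - μ|)
  rw [Finset.card_univ, ← hNdef, ← hBdef] at hcards
  have hle := Finset.card_le_card hsubset
  have hGge : (N : ℝ) - B.card ≤
      ((Finset.univ.filter
        (fun a : Fin i → ZMod 2 × (Fin n → ZMod 2) =>
          (1 + ε)⁻¹ * W ≤ (2 : ℝ) ^ i * ∑ y ∈ R.filter (fun y => hashXor n i a y = α), w y ∧
          (2 : ℝ) ^ i * (∑ y ∈ R.filter (fun y => hashXor n i a y = α), w y) ≤ (1 + ε) * W)).card : ℝ) := by
    have hcc : ((Finset.univ.filter
        (fun a : Fin i → ZMod 2 × (Fin n → ZMod 2) => ¬ t < |S a - μ|)).card : ℝ)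
        = (N : ℝ) - B.card := by
      have h := hcards
      push_cast [← h]
      ring
    rw [← hcc]
    exact_mod_cast hle
  have hexp : Real.exp (-(3/2 : ℝ)) = E⁻¹ := by rw [hEdef, ← Real.exp_neg]
  rw [hexp, le_div_iff₀ hN0]
  have hB' : (B.card : ℝ) ≤ N * E⁻¹ := by
    have h := mul_le_mul_of_nonneg_right hBcard (inv_nonneg.mpr hE0.le)
    rwa [mul_assoc, mul_inv_cancel₀ hE0.ne', mul_one] at h
  linarith [hGge, hB']
end

section
/- Let R be a finite subset of (Fin n → ZMod 2), let w be a weight function with w(y) ∈ (0,1] for all y ∈ R, and write w(A) = Σ_{y∈A} w(y). Let 0 < ε ≤ 1, let pivot = 2·⌈e^{3/2}·(1 + 1/ε)²⌉, and let m ≥ 0 be an integer such that 2^{-m} · w(R) = pivot / 2. Then for every fixed α ∈ (Fin m → ZMod 2), if h is chosen uniformly at random from H_xor(n, m), then Pr[ 0 < w(R ∩ h^{-1}(α)) ≤ pivot ] ≥ 1 − e^{-3/2}. -/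
open scoped Classical

section AuxHashXor
open Finset
open scoped Classical
open Finset

lemma zmod2_ne_iff : ∀ (x t : ZMod 2), (¬ x = t) ↔ x = t + 1 := by decide

lemma zmod2_two : ∀ (x : ZMod 2), x + 1 + 1 = x := by decide

lemma count_lin {n : ℕ} (c : Fin n → ZMod 2) (hc : c ≠ 0) (t : ZMod 2) :
    (Finset.univ.filter (fun b : Fin n → ZMod 2 => ∑ l, b l * c l = t)).card = 2 ^ (n - 1) := by
  obtain ⟨l₀, hl₀⟩ : ∃ l₀, c l₀ ≠ 0 := by
    by_contra h; push_neg at h; exact hc (funext fun l => h l)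
  have hc1 : c l₀ = 1 := by rw [ne_eq, zmod2_ne_iff] at hl₀; simpa using hl₀
  set e : Fin n → ZMod 2 := Pi.single l₀ 1 with he
  have hsum : ∀ b : Fin n → ZMod 2,
      ∑ l, (b + e) l * c l = (∑ l, b l * c l) + 1 := by
    intro b
    have h1 : ∀ l, (b + e) l * c l = b l * c l + e l * c l := by
      intro l; simp [add_mul]
    rw [Finset.sum_congr rfl (fun l _ => h1 l), Finset.sum_add_distrib]
    congr 1
    rw [Finset.sum_eq_single l₀]
    · simp [he, hc1]
    · intro b' _ hb'; simp [he, Pi.single_eq_of_ne hb']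
    · simp
  have hinv : ∀ b : Fin n → ZMod 2, b + e + e = b := by
    intro b; funext l; by_cases h : l = l₀
    · subst h; simp [he, zmod2_two]
    · simp [he, Pi.single_eq_of_ne h]
  have key : ∀ s : ZMod 2,
      (univ.filter (fun b : Fin n → ZMod 2 => ∑ l, b l * c l = s)).card
      = (univ.filter (fun b : Fin n → ZMod 2 => ∑ l, b l * c l = s + 1)).card := by
    intro s
    apply Finset.card_bij' (fun b _ => b + e) (fun b _ => b + e)
    · intro b hb; simp only [mem_filter, mem_univ, true_and] at hb ⊢; rw [hsum, hb]
    · intro b hb; simp only [mem_filter, mem_univ, true_and] at hb ⊢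
      rw [hsum, hb, zmod2_two]
    · intro b _; exact hinv b
    · intro b _; exact hinv b
  have htot := Finset.card_filter_add_card_filter_not
    (s := (univ : Finset (Fin n → ZMod 2))) (fun b => ∑ l, b l * c l = t)
  have hneg : (univ.filter (fun b : Fin n → ZMod 2 => ¬ ∑ l, b l * c l = t))
      = univ.filter (fun b : Fin n → ZMod 2 => ∑ l, b l * c l = t + 1) := by
    apply Finset.filter_congr; intro b _; rw [zmod2_ne_iff]
  rw [hneg, ← key t] at htot
  have hcard : (univ : Finset (Fin n → ZMod 2)).card = 2 ^ n := by
    simp [Finset.card_univ]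
  have hn1 : 1 ≤ n := Nat.one_le_iff_ne_zero.mpr (by rintro rfl; exact absurd l₀.2 (by simp))
  rw [hcard] at htot
  clear hsum hinv key hneg hc hl₀ hc1 he hcard
  have h2 : 2 ^ n = 2 * 2 ^ (n - 1) := by
    clear htot
    cases n with
    | zero => omega
    | succ k => simp [pow_succ']
  generalize hK : (univ.filter (fun b : Fin n → ZMod 2 => ∑ l, b l * c l = t)).card = K at htot ⊢
  clear hK
  omega

lemma filter_pi_card {n m : ℕ} (P : Fin m → (ZMod 2 × (Fin n → ZMod 2)) → Prop) :
    (Finset.univ.filter (fun a : Fin m → ZMod 2 × (Fin n → ZMod 2) => ∀ j, P j (a j))).card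
      = ∏ j, (Finset.univ.filter (P j)).card := by
  rw [← Fintype.card_piFinset]
  congr 1
  ext a
  simp [Fintype.mem_piFinset]

lemma count_single {n : ℕ} (y : Fin n → ZMod 2) (t : ZMod 2) :
    (Finset.univ.filter (fun p : ZMod 2 × (Fin n → ZMod 2) =>
      p.1 + ∑ l, p.2 l * y l = t)).card = 2 ^ n := by
  have key : (Finset.univ.filter (fun p : ZMod 2 × (Fin n → ZMod 2) =>
      p.1 + ∑ l, p.2 l * y l = t)).card = (Finset.univ : Finset (Fin n → ZMod 2)).card := by
    refine Finset.card_bij' (fun p _ => p.2)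
      (fun b _ => ((t - ∑ l, b l * y l : ZMod 2), b)) ?_ ?_ ?_ ?_
    · intro p _; exact mem_univ _
    · intro b _; simp only [mem_filter, mem_univ, true_and]; ring
    · intro p hp
      simp only [mem_filter, mem_univ, true_and] at hp
      obtain ⟨p1, p2⟩ := p
      simp only [Prod.mk.injEq]
      exact ⟨by linear_combination -hp, trivial⟩
    · intro b _; rfl
  rw [key]; simp [Finset.card_univ]

lemma count_double {n : ℕ} (y z : Fin n → ZMod 2) (hyz : y ≠ z) (t : ZMod 2) :
    (Finset.univ.filter (fun p : ZMod 2 × (Fin n → ZMod 2) =>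
      p.1 + ∑ l, p.2 l * y l = t ∧ p.1 + ∑ l, p.2 l * z l = t)).card = 2 ^ (n - 1) := by
  have hchar : ∀ (u v : ZMod 2), u + v = 0 ↔ u = v := by decide
  have hc : (fun l => y l + z l) ≠ (0 : Fin n → ZMod 2) := by
    intro h; apply hyz; funext l
    have := congrFun h l
    simpa [hchar] using this
  have hsplit : ∀ b : Fin n → ZMod 2,
      ∑ l, b l * (y l + z l) = (∑ l, b l * y l) + ∑ l, b l * z l := by
    intro b; rw [← Finset.sum_add_distrib]; apply Finset.sum_congr rfl; intro l _; ring
  have key : (Finset.univ.filter (fun p : ZMod 2 × (Fin n → ZMod 2) =>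
      p.1 + ∑ l, p.2 l * y l = t ∧ p.1 + ∑ l, p.2 l * z l = t)).card
      = (Finset.univ.filter (fun b : Fin n → ZMod 2 =>
          ∑ l, b l * (y l + z l) = 0)).card := by
    refine Finset.card_bij' (fun p _ => p.2)
      (fun b _ => ((t - ∑ l, b l * y l : ZMod 2), b)) ?_ ?_ ?_ ?_
    · intro p hp
      simp only [mem_filter, mem_univ, true_and] at hp ⊢
      obtain ⟨h1, h2⟩ := hp
      rw [hsplit]
      have e1 : ∑ l, p.2 l * y l = t - p.1 := by linear_combination h1
      have e2 : ∑ l, p.2 l * z l = t - p.1 := by linear_combination h2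
      rw [e1, e2, hchar]
    · intro b hb
      simp only [mem_filter, mem_univ, true_and] at hb ⊢
      rw [hsplit, hchar] at hb
      exact ⟨by ring, by rw [← hb]; ring⟩
    · intro p hp
      simp only [mem_filter, mem_univ, true_and] at hp
      obtain ⟨p1, p2⟩ := p
      simp only [Prod.mk.injEq]
      exact ⟨by linear_combination -hp.1, trivial⟩
    · intro b _; rfl
  rw [key]
  exact count_lin (fun l => y l + z l) hc 0

lemma count_hash_single {n m : ℕ} (y : Fin n → ZMod 2) (α : Fin m → ZMod 2) :
    (Finset.univ.filter (fun a : Fin m → ZMod 2 × (Fin n → ZMod 2) =>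
      hashXor n m a y = α)).card = 2 ^ (n * m) := by
  have : (Finset.univ.filter (fun a : Fin m → ZMod 2 × (Fin n → ZMod 2) =>
      hashXor n m a y = α))
      = Finset.univ.filter (fun a : Fin m → ZMod 2 × (Fin n → ZMod 2) =>
        ∀ j, (a j).1 + ∑ l, (a j).2 l * y l = α j) := by
    apply Finset.filter_congr; intro a _
    simp only [hashXor, funext_iff]
  have hset : Finset.univ.filter (fun a : Fin m → ZMod 2 × (Fin n → ZMod 2) =>
        ∀ j, (a j).1 + ∑ l, (a j).2 l * y l = α j)
      = Fintype.piFinset (fun j => Finset.univ.filter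
          (fun p : ZMod 2 × (Fin n → ZMod 2) => p.1 + ∑ l, p.2 l * y l = α j)) := by
    ext a; simp [Fintype.mem_piFinset]
  rw [this, hset, Fintype.card_piFinset]
  simp only [count_single]
  rw [Finset.prod_const, Finset.card_univ, Fintype.card_fin, ← pow_mul]

lemma count_hash_double {n m : ℕ} (y z : Fin n → ZMod 2) (hyz : y ≠ z) (α : Fin m → ZMod 2) :
    (Finset.univ.filter (fun a : Fin m → ZMod 2 × (Fin n → ZMod 2) =>
      hashXor n m a y = α ∧ hashXor n m a z = α)).card = 2 ^ ((n - 1) * m) := by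
  have : (Finset.univ.filter (fun a : Fin m → ZMod 2 × (Fin n → ZMod 2) =>
      hashXor n m a y = α ∧ hashXor n m a z = α))
      = Finset.univ.filter (fun a : Fin m → ZMod 2 × (Fin n → ZMod 2) =>
        ∀ j, ((a j).1 + ∑ l, (a j).2 l * y l = α j ∧ (a j).1 + ∑ l, (a j).2 l * z l = α j)) := by
    apply Finset.filter_congr; intro a _
    simp only [hashXor, funext_iff, ← forall_and]
  have hset : Finset.univ.filter (fun a : Fin m → ZMod 2 × (Fin n → ZMod 2) =>
        ∀ j, ((a j).1 + ∑ l, (a j).2 l * y l = α j ∧ (a j).1 + ∑ l, (a j).2 l * z l = α j))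
      = Fintype.piFinset (fun j => Finset.univ.filter
          (fun p : ZMod 2 × (Fin n → ZMod 2) =>
            p.1 + ∑ l, p.2 l * y l = α j ∧ p.1 + ∑ l, p.2 l * z l = α j)) := by
    ext a; simp [Fintype.mem_piFinset]
  rw [this, hset, Fintype.card_piFinset]
  have hj : ∀ j, (Finset.univ.filter (fun p : ZMod 2 × (Fin n → ZMod 2) =>
      p.1 + ∑ l, p.2 l * y l = α j ∧ p.1 + ∑ l, p.2 l * z l = α j)).card = 2 ^ (n - 1) :=
    fun j => count_double y z hyz (α j)
  rw [Finset.prod_congr rfl (fun j _ => hj j)]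
  rw [Finset.prod_const, Finset.card_univ, Fintype.card_fin, ← pow_mul]

lemma sum_X {n m : ℕ} (R : Finset (Fin n → ZMod 2)) (w : (Fin n → ZMod 2) → ℝ)
    (α : Fin m → ZMod 2) :
    ∑ a : Fin m → ZMod 2 × (Fin n → ZMod 2),
        (∑ y ∈ R.filter (fun y => hashXor n m a y = α), w y)
      = (2^(n*m) : ℕ) * ∑ y ∈ R, w y := by
  have h1 : ∀ a : Fin m → ZMod 2 × (Fin n → ZMod 2),
      (∑ y ∈ R.filter (fun y => hashXor n m a y = α), w y)
      = ∑ y ∈ R, if hashXor n m a y = α then w y else 0 := fun a => Finset.sum_filter _ _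
  rw [Finset.sum_congr rfl (fun a _ => h1 a), Finset.sum_comm]
  have h2 : ∀ y ∈ R, (∑ a : Fin m → ZMod 2 × (Fin n → ZMod 2),
      if hashXor n m a y = α then w y else 0) = (2^(n*m) : ℕ) * w y := by
    intro y _
    rw [← Finset.sum_filter, Finset.sum_const, nsmul_eq_mul, count_hash_single]
  rw [Finset.sum_congr rfl h2, ← Finset.mul_sum]

lemma sum_X_sq {n m : ℕ} (R : Finset (Fin n → ZMod 2)) (w : (Fin n → ZMod 2) → ℝ)
    (α : Fin m → ZMod 2) :
    ∑ a : Fin m → ZMod 2 × (Fin n → ZMod 2),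
        (∑ y ∈ R.filter (fun y => hashXor n m a y = α), w y)^2
      = (2^(n*m) : ℕ) * (∑ y ∈ R, (w y)^2)
        + (2^((n-1)*m) : ℕ) * ((∑ y ∈ R, w y)^2 - ∑ y ∈ R, (w y)^2) := by
  have h1 : ∀ a : Fin m → ZMod 2 × (Fin n → ZMod 2),
      (∑ y ∈ R.filter (fun y => hashXor n m a y = α), w y)^2
      = ∑ y ∈ R, ∑ z ∈ R, (if hashXor n m a y = α ∧ hashXor n m a z = α
          then w y * w z else 0) := by
    intro a
    rw [Finset.sum_filter, sq, Finset.sum_mul_sum]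
    apply Finset.sum_congr rfl; intro y _
    apply Finset.sum_congr rfl; intro z _
    by_cases hy : hashXor n m a y = α <;> by_cases hz : hashXor n m a z = α <;>
      simp [hy, hz]
  rw [Finset.sum_congr rfl (fun a _ => h1 a), Finset.sum_comm]
  have h2 : ∀ y ∈ R, (∑ a : Fin m → ZMod 2 × (Fin n → ZMod 2), ∑ z ∈ R,
      (if hashXor n m a y = α ∧ hashXor n m a z = α then w y * w z else 0))
      = ∑ z ∈ R, (((Finset.univ.filter (fun a : Fin m → ZMod 2 × (Fin n → ZMod 2) =>
          hashXor n m a y = α ∧ hashXor n m a z = α)).card : ℕ) : ℝ) * (w y * w z) := by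
    intro y _
    rw [Finset.sum_comm]
    apply Finset.sum_congr rfl; intro z _
    rw [← Finset.sum_filter, Finset.sum_const, nsmul_eq_mul]
  rw [Finset.sum_congr rfl h2]
  -- now split diagonal
  have h3 : ∀ y ∈ R, ∑ z ∈ R, (((Finset.univ.filter
        (fun a : Fin m → ZMod 2 × (Fin n → ZMod 2) =>
          hashXor n m a y = α ∧ hashXor n m a z = α)).card : ℕ) : ℝ) * (w y * w z)
      = (2^(n*m) : ℕ) * (w y)^2
        + (2^((n-1)*m) : ℕ) * ∑ z ∈ R.erase y, w y * w z := by
    intro y hy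
    rw [← Finset.add_sum_erase _ _ hy]
    congr 1
    · have : (Finset.univ.filter (fun a : Fin m → ZMod 2 × (Fin n → ZMod 2) =>
          hashXor n m a y = α ∧ hashXor n m a y = α))
          = Finset.univ.filter (fun a : Fin m → ZMod 2 × (Fin n → ZMod 2) =>
          hashXor n m a y = α) := by
        apply Finset.filter_congr; intro a _; simp
      rw [this, count_hash_single]; ring
    · rw [Finset.mul_sum]
      apply Finset.sum_congr rfl; intro z hz
      rw [count_hash_double y z (by
        intro h; exact (Finset.mem_erase.mp hz).1 h.symm) α]
  have h4 : ∀ y ∈ R, ∑ z ∈ R.erase y, w y * w z = w y * (∑ z ∈ R, w z) - (w y)^2 := by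
    intro y hy
    rw [← Finset.mul_sum, ← Finset.add_sum_erase _ _ hy]
    ring
  have h5 : ∑ y ∈ R, ∑ z ∈ R.erase y, w y * w z
      = (∑ y ∈ R, w y)^2 - ∑ y ∈ R, (w y)^2 := by
    rw [Finset.sum_congr rfl h4, Finset.sum_sub_distrib, ← Finset.sum_mul]
    ring
  rw [Finset.sum_congr rfl h3, Finset.sum_add_distrib, ← Finset.mul_sum, ← Finset.mul_sum, h5]


lemma chebyshev_count {T : Type*} [Fintype T] (X : T → ℝ) (μ piv : ℝ)
    (hμ : μ = piv / 2) (hμpos : 0 < μ)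
    (hXnn : ∀ a, 0 ≤ X a)
    (hcard : 0 < Fintype.card T)
    (hsum : ∑ a : T, (X a - μ)^2 ≤ (Fintype.card T : ℝ) * μ) :
    1 - 1/μ ≤ ((Finset.univ.filter (fun a => 0 < X a ∧ X a ≤ piv)).card : ℝ)
      / (Fintype.card T : ℝ) := by
  set Fail := Finset.univ.filter (fun a : T => ¬(0 < X a ∧ X a ≤ piv)) with hFail
  have hkey : ∀ a ∈ Fail, μ^2 ≤ (X a - μ)^2 := by
    intro a ha
    rw [hFail, mem_filter] at ha
    have ha' := ha.2
    by_cases h0 : 0 < X a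
    · have hgt : piv < X a := by
        by_contra hle; push_neg at hle; exact ha' ⟨h0, hle⟩
      have : μ ≤ X a - μ := by linarith
      nlinarith
    · have : X a = 0 := le_antisymm (not_lt.mp h0) (hXnn a)
      rw [this]; nlinarith
  have hFbound : (Fail.card : ℝ) * μ^2 ≤ (Fintype.card T : ℝ) * μ := by
    calc (Fail.card : ℝ) * μ^2 = ∑ _a ∈ Fail, μ^2 := by
            rw [Finset.sum_const, nsmul_eq_mul]
      _ ≤ ∑ a ∈ Fail, (X a - μ)^2 := Finset.sum_le_sum hkey
      _ ≤ ∑ a : T, (X a - μ)^2 := by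
            apply Finset.sum_le_sum_of_subset_of_nonneg (Finset.subset_univ _)
            intro a _ _; positivity
      _ ≤ (Fintype.card T : ℝ) * μ := hsum
  have hFle : (Fail.card : ℝ) ≤ (Fintype.card T : ℝ) / μ := by
    rw [le_div_iff₀ hμpos]
    nlinarith
  have hsplit : (Finset.univ.filter (fun a : T => 0 < X a ∧ X a ≤ piv)).card + Fail.card
      = Fintype.card T := by
    rw [hFail]
    rw [Finset.card_filter_add_card_filter_not]
    exact Finset.card_univ
  have hN : (0:ℝ) < (Fintype.card T : ℝ) := by exact_mod_cast hcard
  have hS : ((Finset.univ.filter (fun a : T => 0 < X a ∧ X a ≤ piv)).card : ℝ)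
      = (Fintype.card T : ℝ) - Fail.card := by
    have := congrArg (Nat.cast : ℕ → ℝ) hsplit
    push_cast at this
    linarith
  rw [hS]
  have h1 : (Fintype.card T : ℝ) - (Fintype.card T : ℝ) * (1/μ)
      ≤ (Fintype.card T : ℝ) - Fail.card := by
    have : (Fintype.card T : ℝ) / μ = (Fintype.card T : ℝ) * (1/μ) := by ring
    linarith [this ▸ hFle]
  calc 1 - 1/μ = ((Fintype.card T : ℝ) - (Fintype.card T : ℝ) * (1/μ)) / (Fintype.card T : ℝ) := by
        field_simp
    _ ≤ ((Fintype.card T : ℝ) - Fail.card) / (Fintype.card T : ℝ) := by gcongr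

end AuxHashXor

set_option maxHeartbeats 2000000 in
/-- With `pivot = 2·⌈e^{3/2}·(1+1/ε)²⌉` and `2^{-m}·w(R) = pivot/2`, a random XOR hash
cell `R ∩ h⁻¹(α)` has weight in `(0, pivot]` with probability at least `1 − e^{-3/2}`. -/
theorem hashXor_cell_weight_in_pivot
    (n m : ℕ) (hn : 1 ≤ n)
    (R : Finset (Fin n → ZMod 2)) (w : (Fin n → ZMod 2) → ℝ)
    (hw : ∀ y ∈ R, w y ∈ Set.Ioc (0 : ℝ) 1)
    (ε : ℝ) (hε0 : 0 < ε) (hε1 : ε ≤ 1)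
    (pivot : ℝ) (hpivot : pivot = 2 * (⌈Real.exp (3 / 2) * (1 + 1 / ε) ^ 2⌉ : ℝ))
    (hm : (2 : ℝ) ^ (-(m : ℤ)) * (∑ y ∈ R, w y) = pivot / 2)
    (α : Fin m → ZMod 2) :
    1 - Real.exp (-(3 / 2)) ≤
      ((Finset.univ.filter
          (fun a : Fin m → ZMod 2 × (Fin n → ZMod 2) =>
            0 < (∑ y ∈ R.filter (fun y => hashXor n m a y = α), w y) ∧
            (∑ y ∈ R.filter (fun y => hashXor n m a y = α), w y) ≤ pivot)).card : ℝ) /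
        (Fintype.card (Fin m → ZMod 2 × (Fin n → ZMod 2)) : ℝ) := by
  classical
  set W : ℝ := ∑ y ∈ R, w y with hW
  set Q : ℝ := ∑ y ∈ R, (w y)^2 with hQdef
  set B : ℝ := (2:ℝ)^m with hB
  have hBpos : (0:ℝ) < B := by positivity
  have hB1 : (1:ℝ) ≤ B := one_le_pow₀ (by norm_num)
  -- rewrite hm
  have hm' : B⁻¹ * W = pivot / 2 := by
    rw [hB, ← zpow_natCast (2:ℝ) m, ← zpow_neg]; exact hm
  -- pivot bounds
  have hexp_pos : (0:ℝ) < Real.exp (3/2) := Real.exp_pos _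
  have hob : (1:ℝ) ≤ (1 + 1/ε)^2 := by
    have : (1:ℝ) ≤ 1 + 1/ε := by
      have : (0:ℝ) < 1/ε := by positivity
      linarith
    nlinarith
  have hpiv_ge : 2 * Real.exp (3/2) ≤ pivot := by
    rw [hpivot]
    have h1 : Real.exp (3/2) * (1 + 1/ε)^2 ≤ (⌈Real.exp (3/2) * (1 + 1/ε)^2⌉ : ℝ) :=
      Int.le_ceil _
    nlinarith
  have hpiv_pos : (0:ℝ) < pivot := by nlinarith
  have hμpos : (0:ℝ) < pivot / 2 := by linarith
  -- weight bounds
  have hQW : Q ≤ W := by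
    rw [hQdef, hW]
    apply Finset.sum_le_sum
    intro y hy
    have h1 := (hw y hy).1
    have h2 := (hw y hy).2
    nlinarith
  have hQ0 : (0:ℝ) ≤ Q := by
    rw [hQdef]; apply Finset.sum_nonneg; intro y _; positivity
  -- cardinality of the hash family
  have hcardT : Fintype.card (Fin m → ZMod 2 × (Fin n → ZMod 2)) = 2^((n+1)*m) := by
    simp [Fintype.card_fun]
    rw [← pow_succ', ← pow_mul]
  have hcardpos : 0 < Fintype.card (Fin m → ZMod 2 × (Fin n → ZMod 2)) := by
    rw [hcardT]; positivity
  -- power identities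
  set c : ℝ := (2:ℝ)^((n-1)*m) with hc
  have hc0 : (0:ℝ) ≤ c := by positivity
  have hpa : ((2:ℝ))^(n*m) = c * B := by
    rw [hc, hB, ← pow_add]
    congr 1
    obtain ⟨k, hk⟩ : ∃ k, n = k + 1 := ⟨n - 1, by omega⟩
    rw [hk]; simp; ring
  have hpA : ((2:ℝ))^((n+1)*m) = c * B * B := by
    rw [hc, hB, ← pow_add, ← pow_add]
    congr 1
    obtain ⟨k, hk⟩ : ∃ k, n = k + 1 := ⟨n - 1, by omega⟩
    rw [hk]; simp; ring
  -- the random variable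
  set X : (Fin m → ZMod 2 × (Fin n → ZMod 2)) → ℝ :=
    fun a => ∑ y ∈ R.filter (fun y => hashXor n m a y = α), w y with hXdef
  have hXnn : ∀ a, 0 ≤ X a := by
    intro a
    apply Finset.sum_nonneg
    intro y hy
    exact le_of_lt (hw y (Finset.mem_filter.mp hy).1).1
  -- moment computations
  have hpa' : ((2:ℝ))^(n*m) = (2:ℝ)^((n-1)*m) * (2:ℝ)^m := by
    rw [hc, hB] at hpa; exact hpa
  have hS1 : ∑ a : Fin m → ZMod 2 × (Fin n → ZMod 2), X a = c * B * W := by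
    rw [hXdef, sum_X R w α, hW, hc, hB]
    push_cast
    rw [hpa']
  have hS2 : ∑ a : Fin m → ZMod 2 × (Fin n → ZMod 2), (X a)^2
      = (c * B) * Q + c * (W^2 - Q) := by
    rw [hXdef, sum_X_sq R w α, hW, hQdef, hc, hB]
    push_cast
    rw [hpa']
  -- variance bound
  have hvar : ∑ a : Fin m → ZMod 2 × (Fin n → ZMod 2), (X a - pivot/2)^2
      = (∑ a : Fin m → ZMod 2 × (Fin n → ZMod 2), (X a)^2)
        - 2*(pivot/2)*(∑ a : Fin m → ZMod 2 × (Fin n → ZMod 2), X a)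
        + (Fintype.card (Fin m → ZMod 2 × (Fin n → ZMod 2)) : ℝ) * (pivot/2)^2 := by
    have h : ∀ a : Fin m → ZMod 2 × (Fin n → ZMod 2),
        (X a - pivot/2)^2 = (X a)^2 - 2*(pivot/2)*(X a) + (pivot/2)^2 := fun a => by ring
    rw [Finset.sum_congr rfl (fun a _ => h a), Finset.sum_add_distrib,
      Finset.sum_sub_distrib, ← Finset.mul_sum, Finset.sum_const, Finset.card_univ,
      nsmul_eq_mul]
  have hsum : ∑ a : Fin m → ZMod 2 × (Fin n → ZMod 2), (X a - pivot/2)^2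
      ≤ (Fintype.card (Fin m → ZMod 2 × (Fin n → ZMod 2)) : ℝ) * (pivot/2) := by
    have hcast : ((Fintype.card (Fin m → ZMod 2 × (Fin n → ZMod 2)) : ℕ) : ℝ)
        = c * B * B := by
      rw [hcardT, ← hpA]; push_cast; ring
    rw [hvar, hS1, hS2, hcast, ← hm']
    have hμ2 : B⁻¹ * B = 1 := inv_mul_cancel₀ (ne_of_gt hBpos)
    have key : (c * B) * Q + c * (W^2 - Q) - 2*(B⁻¹*W)*(c*B*W) + (c*B*B)*(B⁻¹*W)^2
        = c * B * Q - c * Q := by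
      field_simp
      ring
    rw [key]
    nlinarith [mul_nonneg (mul_nonneg hc0 hBpos.le) (sub_nonneg.mpr hQW),
      mul_nonneg hc0 hQ0]
  -- apply the Chebyshev counting lemma
  have main := chebyshev_count X (pivot/2) pivot rfl hμpos hXnn hcardpos hsum
  have hfrac : 1 / (pivot/2) ≤ Real.exp (-(3/2)) := by
    rw [Real.exp_neg, ← one_div]
    exact one_div_le_one_div_of_le hexp_pos (by linarith only [hpiv_ge])
  have hfe : (Finset.univ.filter
      (fun a : Fin m → ZMod 2 × (Fin n → ZMod 2) =>
        0 < (∑ y ∈ R.filter (fun y => hashXor n m a y = α), w y) ∧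
        (∑ y ∈ R.filter (fun y => hashXor n m a y = α), w y) ≤ pivot))
      = Finset.univ.filter (fun a => 0 < X a ∧ X a ≤ pivot) := by
    apply Finset.filter_congr
    intro a _
    exact Iff.rfl
  rw [hfe]
  calc 1 - Real.exp (-(3/2)) ≤ 1 - 1/(pivot/2) := by linarith only [hfrac]
    _ ≤ _ := main
end

section
/- For every even positive integer t, Σ_{k=t/2}^{t} (t choose k) · (0.4)^{k} · (0.6)^{t−k} ≤ 3 · (0.98)^{t}. -/
/-- For every even positive integer `t`, the binomial upper tail
`Σ_{k=t/2}^{t} C(t,k)·(0.4)^k·(0.6)^{t−k}` is at most `3·(0.98)^t`. -/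
theorem binomial_tail_bound
    (t : ℕ) (ht : 0 < t) (heven : Even t) :
    ∑ k ∈ Finset.Icc (t / 2) t, (t.choose k : ℝ) * (0.4 : ℝ) ^ k * (0.6 : ℝ) ^ (t - k) ≤
      3 * (0.98 : ℝ) ^ t := by
  obtain ⟨m, rfl⟩ := heven
  have hm : (m + m) / 2 = m := by omega
  rw [hm]
  have key : ∀ k ∈ Finset.Icc m (m + m),
      ((m + m).choose k : ℝ) * (0.4 : ℝ) ^ k * (0.6 : ℝ) ^ (m + m - k)
        ≤ ((m + m).choose k : ℝ) * (0.24 : ℝ) ^ m := by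
    intro k hk
    simp only [Finset.mem_Icc] at hk
    have e1 : (0.4 : ℝ) ^ k = 0.4 ^ m * 0.4 ^ (k - m) := by
      rw [← pow_add]; congr 1; omega
    have e2 : (0.6 : ℝ) ^ (k - m) * 0.6 ^ (m + m - k) = 0.6 ^ m := by
      rw [← pow_add]; congr 1; omega
    have h1 : (0.4 : ℝ) ^ k * (0.6 : ℝ) ^ (m + m - k) ≤ (0.24 : ℝ) ^ m := by
      calc (0.4 : ℝ) ^ k * (0.6 : ℝ) ^ (m + m - k)
          = 0.4 ^ m * ((0.4 : ℝ) ^ (k - m) * 0.6 ^ (m + m - k)) := by rw [e1]; ring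
        _ ≤ 0.4 ^ m * ((0.6 : ℝ) ^ (k - m) * 0.6 ^ (m + m - k)) := by
            have := pow_le_pow_left₀ (by norm_num : (0:ℝ) ≤ 0.4) (by norm_num : (0.4:ℝ) ≤ 0.6) (k - m)
            have h6 : (0:ℝ) ≤ 0.6 ^ (m + m - k) := by positivity
            exact mul_le_mul_of_nonneg_left (mul_le_mul_of_nonneg_right this h6) (by positivity)
        _ = 0.4 ^ m * 0.6 ^ m := by rw [e2]
        _ = (0.24 : ℝ) ^ m := by rw [← mul_pow]; norm_num
    rw [mul_assoc]
    exact mul_le_mul_of_nonneg_left h1 (by positivity)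
  calc ∑ k ∈ Finset.Icc m (m + m), ((m + m).choose k : ℝ) * (0.4 : ℝ) ^ k * (0.6 : ℝ) ^ (m + m - k)
      ≤ ∑ k ∈ Finset.Icc m (m + m), ((m + m).choose k : ℝ) * (0.24 : ℝ) ^ m :=
        Finset.sum_le_sum key
    _ = (∑ k ∈ Finset.Icc m (m + m), ((m + m).choose k : ℝ)) * (0.24 : ℝ) ^ m := by
        rw [Finset.sum_mul]
    _ ≤ (∑ k ∈ Finset.range (m + m + 1), ((m + m).choose k : ℝ)) * (0.24 : ℝ) ^ m := by
        apply mul_le_mul_of_nonneg_right _ (by positivity)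
        apply Finset.sum_le_sum_of_subset_of_nonneg
        · intro x hx
          simp only [Finset.mem_Icc] at hx
          simp only [Finset.mem_range]
          omega
        · intro i _ _; positivity
    _ = (2 : ℝ) ^ (m + m) * (0.24 : ℝ) ^ m := by
        congr 1
        rw [← Nat.cast_sum]
        rw [Nat.sum_range_choose]
        push_cast
        ring
    _ = (0.96 : ℝ) ^ m := by
        rw [pow_add, ← mul_pow, ← mul_pow]
        norm_num
    _ ≤ (0.98 : ℝ) ^ (m + m) := by
        rw [pow_add, ← mul_pow]
        exact pow_le_pow_left₀ (by norm_num) (by norm_num) _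
    _ ≤ 3 * (0.98 : ℝ) ^ (m + m) := by
        nlinarith [pow_nonneg (by norm_num : (0:ℝ) ≤ 0.98) (m + m)]
end

section
/- Let w_R > 0, w_max ∈ (0,1], and pivot > 0 be real numbers, and set W = w_R / w_max. Suppose W ≥ 18 and let C > 0 be a real number satisfying C/1.8 ≤ w_R ≤ 1.8·C. Define q = ⌈log₂(C/w_max) + log₂(1.8) − log₂(pivot)⌉ and m = log₂(W − 1) − log₂(pivot). Then q − 3 ≤ m ≤ q. -/
/-- If `W = w_R/w_max ≥ 18` and `C` approximates `w_R` within a factor `1.8`, then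
`q = ⌈log₂(C/w_max) + log₂ 1.8 − log₂ pivot⌉` satisfies `q − 3 ≤ m ≤ q`, where
`m = log₂(W − 1) − log₂ pivot`. -/
theorem q_estimates_m
    (wR wmax pivot : ℝ) (hwR : 0 < wR) (hwmax0 : 0 < wmax) (hwmax1 : wmax ≤ 1)
    (hpivot : 0 < pivot) (hW : 18 ≤ wR / wmax)
    (C : ℝ) (hC : 0 < C) (hC1 : C / 1.8 ≤ wR) (hC2 : wR ≤ 1.8 * C) :
    (⌈Real.logb 2 (C / wmax) + Real.logb 2 1.8 - Real.logb 2 pivot⌉ : ℝ) - 3 ≤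
        Real.logb 2 (wR / wmax - 1) - Real.logb 2 pivot ∧
      Real.logb 2 (wR / wmax - 1) - Real.logb 2 pivot ≤
        (⌈Real.logb 2 (C / wmax) + Real.logb 2 1.8 - Real.logb 2 pivot⌉ : ℝ) := by
  have hWm1 : (17 : ℝ) ≤ wR / wmax - 1 := by linarith
  have hWm1pos : (0 : ℝ) < wR / wmax - 1 := by linarith
  have hCw : 0 < C / wmax := div_pos hC hwmax0
  have hsum : Real.logb 2 (C / wmax) + Real.logb 2 1.8 =
      Real.logb 2 (C / wmax * 1.8) := by
    rw [Real.logb_mul (ne_of_gt hCw) (by norm_num)]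
  have hCle : C ≤ wR * 1.8 := (div_le_iff₀ (by norm_num : (0:ℝ) < 1.8)).mp hC1
  have h1 : C / wmax ≤ 1.8 * (wR / wmax) := by
    have := div_le_div_of_nonneg_right (c := wmax) (by linarith : C ≤ 1.8 * wR) hwmax0.le
    rwa [mul_div_assoc] at this
  have hWle : wR / wmax ≤ C / wmax * 1.8 := by
    have := div_le_div_of_nonneg_right (c := wmax) hC2 hwmax0.le
    rwa [mul_div_assoc, mul_comm] at this
  constructor
  · have hceil : (⌈Real.logb 2 (C / wmax) + Real.logb 2 1.8 - Real.logb 2 pivot⌉ : ℝ) <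
        Real.logb 2 (C / wmax) + Real.logb 2 1.8 - Real.logb 2 pivot + 1 :=
      Int.ceil_lt_add_one _
    have hkey : C / wmax * 1.8 ≤ 4 * (wR / wmax - 1) := by nlinarith [hW, h1]
    have hlog : Real.logb 2 (C / wmax * 1.8) ≤
        Real.logb 2 4 + Real.logb 2 (wR / wmax - 1) := by
      rw [← Real.logb_mul (by norm_num) (ne_of_gt hWm1pos)]
      exact Real.logb_le_logb_of_le (by norm_num) (by positivity) hkey
    have h4 : Real.logb 2 (4 : ℝ) = 2 := by
      rw [show (4:ℝ) = 2 ^ (2:ℕ) by norm_num, Real.logb_pow,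
        Real.logb_self_eq_one (by norm_num)]
      norm_num
    rw [← hsum] at hlog
    linarith
  · have hlog : Real.logb 2 (wR / wmax - 1) ≤ Real.logb 2 (C / wmax * 1.8) :=
      Real.logb_le_logb_of_le (by norm_num) hWm1pos (by linarith)
    rw [← hsum] at hlog
    linarith [Int.le_ceil (Real.logb 2 (C / wmax) + Real.logb 2 1.8 - Real.logb 2 pivot)]
end

section
/- Let R be a finite subset of (Fin n → ZMod 2), let w be a weight function with w(y) ∈ (0,1] for all y ∈ R, and write w(A) = Σ_{y∈A} w(y). Let κ ∈ (0,1), let pivot = ⌈e^{3/2}·(1 + 1/κ)²⌉, let m ≥ 0 be an integer such that w(R) − 1 = 2^{m} · pivot, and fix y ∈ R and α ∈ (Fin m → ZMod 2). If h is chosen uniformly at random from H_xor(n, m), then Pr[ pivot/(1+κ) ≤ w(R ∩ h^{-1}(α)) ≤ 1 + (1+κ)·pivot and h(y) = α ] ≥ (1 − e^{-3/2}) · 2^{-m}. -/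
open scoped Classical

open Finset
open scoped Matrix

/-!
Condition on the event `h y = α`. Over `ZMod 2` the vectors `(1, z)` for at most three distinct
points `z` are linearly independent, so the hash values of up to three distinct points are
independent and uniform. Hence, given `h y = α`, the events `h z = α` for `z ≠ y` are pairwise
independent of probability `p = 2⁻ᵐ`, and the weight `F` of the rest of the cell has mean
`p · w(R \ {y}) = pivot + p (1 - w y)` and variance at most `(1 - p)` times its mean, which is at
most `pivot`. Chebyshev's inequality with deviation `κ/(1+κ) · pivot` then fails with probability
at most `pivot / (κ/(1+κ) · pivot)² ≤ e^{-3/2}` by the choice of `pivot`, and on the remaining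
event the cell weight `w y + F` lies in the required window.
-/

theorem sum_filter_eq_add_sum_filter_erase {α β : Type*} [DecidableEq α] [AddCommMonoid β]
    {R : Finset α} {y : α} (hy : y ∈ R) (P : α → Prop) [DecidablePred P] (hPy : P y)
    (w : α → β) : ∑ z ∈ R with P z, w z = w y + ∑ z ∈ R.erase y with P z, w z := by
  rw [← add_sum_erase _ _ (mem_filter.mpr ⟨hy, hPy⟩), filter_erase]

section SecondMoment

variable {Ω ι : Type*} (S : Finset Ω)

theorem sum_centered_indicator_mul [DecidableEq ι] (A : ι → Ω → Prop)
    [∀ z, DecidablePred (A z)] {p : ℝ} {z z' : ι}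
    (hz : (#{a ∈ S | A z a} : ℝ) = p * #S) (hz' : (#{a ∈ S | A z' a} : ℝ) = p * #S)
    (hzz' : z ≠ z' → (#{a ∈ S | A z a ∧ A z' a} : ℝ) = p ^ 2 * #S) :
    ∑ a ∈ S, ((if A z a then 1 else 0) - p) * ((if A z' a then 1 else 0) - p) =
      if z = z' then p * (1 - p) * #S else 0 := by
  have hexpand : ∀ a, ((if A z a then 1 else 0) - p) * ((if A z' a then 1 else 0) - p) =
      (if A z a ∧ A z' a then 1 else 0) - p * (if A z a then 1 else 0)
        - p * (if A z' a then 1 else 0) + p ^ 2 := by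
    intro a; split_ifs <;> simp_all <;> ring
  simp only [hexpand, sum_add_distrib, sum_sub_distrib, ← mul_sum, sum_boole, sum_const,
    nsmul_eq_mul, hz, hz']
  split_ifs with h
  · subst h
    simp only [and_self, hz]
    ring
  · rw [hzz' h]
    ring

theorem sum_sq_sum_filter_sub_eq [DecidableEq ι] (A : ι → Ω → Prop)
    [∀ z, DecidablePred (A z)] {p : ℝ} (E : Finset ι) (w : ι → ℝ)
    (h₁ : ∀ z ∈ E, (#{a ∈ S | A z a} : ℝ) = p * #S)
    (h₂ : ∀ z ∈ E, ∀ z' ∈ E, z ≠ z' →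
      (#{a ∈ S | A z a ∧ A z' a} : ℝ) = p ^ 2 * #S) :
    ∑ a ∈ S, (∑ z ∈ E with A z a, w z - p * ∑ z ∈ E, w z) ^ 2 =
      p * (1 - p) * (∑ z ∈ E, w z ^ 2) * #S := by
  set X : ι → Ω → ℝ := fun z a => if A z a then 1 else 0
  have hcentered : ∀ a, ∑ z ∈ E with A z a, w z - p * ∑ z ∈ E, w z =
      ∑ z ∈ E, w z * (X z a - p) := by
    intro a
    rw [sum_filter, mul_sum, ← sum_sub_distrib]
    refine sum_congr rfl fun z _ => ?_
    split_ifs <;> simp [X, *] <;> ring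
  calc ∑ a ∈ S, (∑ z ∈ E with A z a, w z - p * ∑ z ∈ E, w z) ^ 2
      = ∑ a ∈ S, ∑ z ∈ E, ∑ z' ∈ E, w z * w z' * ((X z a - p) * (X z' a - p)) := by
        refine sum_congr rfl fun a _ => ?_
        rw [hcentered, sq, sum_mul_sum]
        exact sum_congr rfl fun z _ => sum_congr rfl fun z' _ => by ring
    _ = ∑ z ∈ E, ∑ z' ∈ E, w z * w z' * ∑ a ∈ S, (X z a - p) * (X z' a - p) := by
        rw [sum_comm]
        refine sum_congr rfl fun z _ => ?_
        rw [sum_comm]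
        simp_rw [mul_sum]
    _ = ∑ z ∈ E, ∑ z' ∈ E, w z * w z' * if z = z' then p * (1 - p) * #S else 0 := by
        refine sum_congr rfl fun z hz => sum_congr rfl fun z' hz' => ?_
        rw [sum_centered_indicator_mul S A (h₁ z hz) (h₁ z' hz') (h₂ z hz z' hz')]
    _ = p * (1 - p) * (∑ z ∈ E, w z ^ 2) * #S := by
        simp only [mul_ite, mul_zero, sum_ite_eq]
        rw [mul_sum, sum_mul]
        refine sum_congr rfl fun z hz => ?_
        rw [if_pos hz]
        ring

theorem one_sub_div_sq_mul_card_le_card_filter_abs_sub_le (f : Ω → ℝ) (μ v : ℝ) {t : ℝ}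
    (hv : ∑ a ∈ S, (f a - μ) ^ 2 ≤ v * #S) (ht : 0 < t) :
    (1 - v / t ^ 2) * #S ≤ #{a ∈ S | |f a - μ| ≤ t} := by
  have hfar : (#{a ∈ S | ¬|f a - μ| ≤ t} : ℝ) * t ^ 2 ≤ v * #S :=
    calc (#{a ∈ S | ¬|f a - μ| ≤ t} : ℝ) * t ^ 2
        = ∑ a ∈ S with ¬|f a - μ| ≤ t, t ^ 2 := by rw [sum_const, nsmul_eq_mul]
      _ ≤ ∑ a ∈ S with ¬|f a - μ| ≤ t, (f a - μ) ^ 2 := by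
          refine sum_le_sum fun a ha => ?_
          rw [← sq_abs (f a - μ)]
          exact pow_le_pow_left₀ ht.le (not_le.mp (mem_filter.mp ha).2).le 2
      _ ≤ ∑ a ∈ S, (f a - μ) ^ 2 :=
          sum_le_sum_of_subset_of_nonneg (filter_subset _ _) fun _ _ _ => sq_nonneg _
      _ ≤ v * #S := hv
  have hsplit : (#{a ∈ S | |f a - μ| ≤ t} : ℝ) + #{a ∈ S | ¬|f a - μ| ≤ t} = #S := by
    exact_mod_cast card_filter_add_card_filter_not (s := S) (fun a => |f a - μ| ≤ t)
  rw [← le_div_iff₀ (by positivity)] at hfar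
  rw [sub_mul, one_mul, div_mul_eq_mul_div]
  linarith

end SecondMoment

theorem zmodTwo_eq_zero_or_eq_one (a : ZMod 2) : a = 0 ∨ a = 1 := by
  revert a; decide

theorem linearIndependent_one_prod_pair {V : Type*} [AddCommGroup V] [Module (ZMod 2) V]
    {y z : V} (hyz : y ≠ z) : LinearIndependent (ZMod 2) fun i => ((1 : ZMod 2), ![y, z] i) := by
  rw [linearIndependent_fin2]
  refine ⟨by simp [Prod.ext_iff], fun a => ?_⟩
  rcases zmodTwo_eq_zero_or_eq_one a with rfl | rfl
  · simp [Prod.ext_iff]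
  · simpa [Prod.ext_iff] using hyz.symm

theorem linearIndependent_one_prod_triple {V : Type*} [AddCommGroup V] [Module (ZMod 2) V]
    {x y z : V} (hxy : x ≠ y) (hxz : x ≠ z) (hyz : y ≠ z) :
    LinearIndependent (ZMod 2) fun i => ((1 : ZMod 2), ![x, y, z] i) := by
  refine linearIndependent_finSucc.mpr ⟨linearIndependent_one_prod_pair hyz, ?_⟩
  rw [Submodule.mem_span_range_iff_exists_fun]
  rintro ⟨c, h⟩
  simp only [Fin.sum_univ_two, Fin.tail] at h
  rcases zmodTwo_eq_zero_or_eq_one (c 0) with h0 | h0 <;>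
    rcases zmodTwo_eq_zero_or_eq_one (c 1) with h1 | h1 <;>
    simp [h0, h1, Prod.ext_iff, hxy.symm, hxz.symm] at h

section AffineEval

variable {K ι : Type*} [Field K] {n : ℕ}

/-- Row `j` of `fun i => hashXor n m a (x i)`, as a linear function of the coefficients `a j`. -/
def affineEval (x : ι → Fin n → K) : (K × (Fin n → K)) →ₗ[K] ι → K where
  toFun b i := b.1 + b.2 ⬝ᵥ x i
  map_add' b c := by
    ext i
    simp only [Prod.fst_add, Prod.snd_add, add_dotProduct, Pi.add_apply]
    ring
  map_smul' s b := by ext i; simp [smul_dotProduct, mul_add]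

@[simp] theorem affineEval_apply (x : ι → Fin n → K) (b : K × (Fin n → K)) (i : ι) :
    affineEval x b i = b.1 + b.2 ⬝ᵥ x i := rfl

theorem affineEval_surjective [Fintype ι] {x : ι → Fin n → K}
    (hx : LinearIndependent K fun i => ((1 : K), x i)) : Function.Surjective (affineEval x) := by
  have hL : LinearIndependent K fun i b => affineEval x b i := by
    rw [Fintype.linearIndependent_iff] at hx ⊢
    intro g hg
    refine hx g (Prod.ext ?_ (funext fun l => ?_))
    · simpa [Prod.fst_sum] using congrFun hg (1, 0)
    · simpa [Prod.snd_sum, Finset.sum_apply, single_dotProduct] using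
        congrFun hg (0, Pi.single l 1)
  have hspan : Submodule.span K (Set.range (affineEval x)) = ⊤ :=
    span_flip_eq_top_iff_linearIndependent.mpr hL
  rwa [← LinearMap.coe_range, Submodule.span_eq, LinearMap.range_eq_top] at hspan

end AffineEval

theorem AddMonoidHom.card_fiber_mul_card_of_surjective {G H : Type*} [AddGroup G] [Fintype G]
    [AddGroup H] [Fintype H] [DecidableEq H] (f : G →+ H) (hf : Function.Surjective f) (t : H) :
    #{g | f g = t} * Fintype.card H = Fintype.card G := by
  calc #{g | f g = t} * Fintype.card H = ∑ s : H, #{g | f g = s} := by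
        rw [sum_congr rfl fun s _ => AddMonoidHom.card_fiber_eq_of_mem_range f (hf s) (hf t),
          sum_const, card_univ, smul_eq_mul, mul_comm]
    _ = Fintype.card G := (card_eq_sum_card_fiberwise fun g _ => mem_univ (f g)).symm

section HashXor

variable {n m : ℕ}

theorem card_filter_forall_hashXor_eq {ι : Type*} [Fintype ι] {x : ι → Fin n → ZMod 2}
    (hx : LinearIndependent (ZMod 2) fun i => ((1 : ZMod 2), x i)) (α : Fin m → ZMod 2) :
    (#{a | ∀ i, hashXor n m a (x i) = α} : ℝ) =
      ((2 : ℝ) ^ m)⁻¹ ^ Fintype.card ι * Fintype.card (Fin m → ZMod 2 × (Fin n → ZMod 2)) := by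
  have h := ((affineEval x).toAddMonoidHom.compLeft (Fin m)).card_fiber_mul_card_of_surjective
    (affineEval_surjective hx).comp_left fun j _ => α j
  have hfiber :
      univ.filter (fun a => (affineEval x).toAddMonoidHom.compLeft (Fin m) a = fun j _ => α j) =
        univ.filter (fun a => ∀ i, hashXor n m a (x i) = α) := by
    ext a
    simp only [funext_iff, AddMonoidHom.compLeft_apply, LinearMap.toAddMonoidHom_coe,
      Function.comp_apply, affineEval_apply, dotProduct, mem_filter, mem_univ, true_and, hashXor]
    exact forall_comm
  have hcard : Fintype.card (Fin m → ι → ZMod 2) = (2 ^ m) ^ Fintype.card ι := by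
    simp [← pow_mul, mul_comm]
  rw [hfiber, hcard] at h
  rw [← h]
  push_cast
  rw [inv_pow, mul_comm, mul_inv_cancel_right₀ (by positivity)]

theorem card_filter_hashXor_eq (y : Fin n → ZMod 2) (α : Fin m → ZMod 2) :
    (#{a | hashXor n m a y = α} : ℝ) =
      ((2 : ℝ) ^ m)⁻¹ * Fintype.card (Fin m → ZMod 2 × (Fin n → ZMod 2)) := by
  have hy : LinearIndependent (ZMod 2) fun i => ((1 : ZMod 2), ![y] i) :=
    linearIndependent_unique_iff.mpr (by simp [Prod.ext_iff])
  simpa using card_filter_forall_hashXor_eq hy α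

theorem card_filter_hashXor_eq_and {y z : Fin n → ZMod 2} (hyz : y ≠ z) (α : Fin m → ZMod 2) :
    (#{a | hashXor n m a y = α ∧ hashXor n m a z = α} : ℝ) =
      ((2 : ℝ) ^ m)⁻¹ ^ 2 * Fintype.card (Fin m → ZMod 2 × (Fin n → ZMod 2)) := by
  simpa [Fin.forall_fin_two] using
    card_filter_forall_hashXor_eq (linearIndependent_one_prod_pair hyz) α

theorem card_filter_hashXor_eq_and_and {x y z : Fin n → ZMod 2} (hxy : x ≠ y) (hxz : x ≠ z)
    (hyz : y ≠ z) (α : Fin m → ZMod 2) :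
    (#{a | hashXor n m a x = α ∧ hashXor n m a y = α ∧ hashXor n m a z = α} : ℝ) =
      ((2 : ℝ) ^ m)⁻¹ ^ 3 * Fintype.card (Fin m → ZMod 2 × (Fin n → ZMod 2)) := by
  simpa [Fin.forall_fin_succ] using
    card_filter_forall_hashXor_eq (linearIndependent_one_prod_triple hxy hxz hyz) α

theorem sum_sq_sum_filter_hashXor_sub_le {y : Fin n → ZMod 2} {E : Finset (Fin n → ZMod 2)}
    (hy : y ∉ E) {w : (Fin n → ZMod 2) → ℝ} (hw : ∀ z ∈ E, w z ∈ Set.Icc (0 : ℝ) 1)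
    (α : Fin m → ZMod 2) :
    ∑ a with hashXor n m a y = α,
        (∑ z ∈ E with hashXor n m a z = α, w z - ((2 : ℝ) ^ m)⁻¹ * ∑ z ∈ E, w z) ^ 2 ≤
      (1 - ((2 : ℝ) ^ m)⁻¹) * (((2 : ℝ) ^ m)⁻¹ * ∑ z ∈ E, w z) *
        #{a | hashXor n m a y = α} := by
  set p : ℝ := ((2 : ℝ) ^ m)⁻¹
  have hp1 : p ≤ 1 := inv_le_one_of_one_le₀ (one_le_pow₀ one_le_two)
  have hS := card_filter_hashXor_eq (n := n) y α
  rw [sum_sq_sum_filter_sub_eq _ (fun z a => hashXor n m a z = α) E w]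
  · have hsq : ∑ z ∈ E, w z ^ 2 ≤ ∑ z ∈ E, w z := sum_le_sum fun z hz => by
      obtain ⟨hz0, hz1⟩ := hw z hz
      nlinarith
    calc p * (1 - p) * (∑ z ∈ E, w z ^ 2) * #{a | hashXor n m a y = α}
        ≤ p * (1 - p) * (∑ z ∈ E, w z) * #{a | hashXor n m a y = α} := by
          gcongr
      _ = _ := by ring
  · intro z hz
    rw [filter_filter, card_filter_hashXor_eq_and (ne_of_mem_of_not_mem hz hy).symm, hS]
    ring
  · intro z hz z' hz' hzz'
    rw [filter_filter, card_filter_hashXor_eq_and_and (ne_of_mem_of_not_mem hz hy).symm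
      (ne_of_mem_of_not_mem hz' hy).symm hzz', hS]
    ring

end HashXor

theorem div_sq_le_inv_of_mul_one_add_inv_sq_le {c κ x : ℝ} (hc : 0 < c) (hκ : 0 < κ)
    (hx : c * (1 + 1 / κ) ^ 2 ≤ x) : x / (κ / (1 + κ) * x) ^ 2 ≤ c⁻¹ := by
  have hx0 : 0 < x := lt_of_lt_of_le (by positivity) hx
  have hrw : x / (κ / (1 + κ) * x) ^ 2 = (1 + 1 / κ) ^ 2 / x := by field_simp; ring
  rw [hrw, div_le_iff₀ hx0, inv_mul_eq_div, le_div_iff₀ hc, mul_comm]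
  exact hx

theorem add_mem_Icc_of_abs_sub_le {u s p x κ : ℝ} (hu : u ∈ Set.Icc (0 : ℝ) 1)
    (hp : p ∈ Set.Icc (0 : ℝ) 1) (hκ : 0 < κ) (hx : 0 ≤ x)
    (h : |s - (x + p * (1 - u))| ≤ κ / (1 + κ) * x) :
    u + s ∈ Set.Icc (x / (1 + κ)) (1 + (1 + κ) * x) := by
  obtain ⟨hu0, hu1⟩ := hu
  obtain ⟨hp0, hp1⟩ := hp
  have hsplit : x / (1 + κ) = x - κ / (1 + κ) * x := by field_simp; ring
  have hle : κ / (1 + κ) * x ≤ κ * x := by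
    gcongr; exact div_le_self hκ.le (by linarith)
  have hpu : 0 ≤ p * (1 - u) := mul_nonneg hp0 (by linarith)
  have hpu' : p * (1 - u) ≤ 1 - u := mul_le_of_le_one_left (by linarith) hp1
  obtain ⟨hlo, hhi⟩ := abs_le.mp h
  constructor <;> linarith

theorem one_sub_mul_add_mul_one_sub_le {p u x : ℝ} (hp : p ∈ Set.Icc (0 : ℝ) 1)
    (hu : u ∈ Set.Icc (0 : ℝ) 1) (hx : 1 ≤ x) : (1 - p) * (x + p * (1 - u)) ≤ x := by
  obtain ⟨hp0, hp1⟩ := hp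
  obtain ⟨hu0, hu1⟩ := hu
  have hle : (1 - p) * (1 - u) ≤ x :=
    (mul_le_one₀ (by linarith) (by linarith) (by linarith)).trans hx
  nlinarith [mul_nonneg hp0 (sub_nonneg.2 hle)]

theorem hashXor_cell_witness_lower_bound_general
    (n m : ℕ)
    (R : Finset (Fin n → ZMod 2)) (w : (Fin n → ZMod 2) → ℝ)
    (hw : ∀ z ∈ R, w z ∈ Set.Ioc (0 : ℝ) 1)
    (κ : ℝ) (hκ0 : 0 < κ)
    (pivot : ℝ) (hpivot : pivot = (⌈Real.exp (3 / 2) * (1 + 1 / κ) ^ 2⌉ : ℝ))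
    (hm : (∑ z ∈ R, w z) - 1 = (2 : ℝ) ^ m * pivot)
    (y : Fin n → ZMod 2) (hy : y ∈ R) (α : Fin m → ZMod 2) :
    (1 - Real.exp (-(3 / 2))) * (2 : ℝ) ^ (-(m : ℤ)) ≤
      ((Finset.univ.filter
          (fun a : Fin m → ZMod 2 × (Fin n → ZMod 2) =>
            (pivot / (1 + κ) ≤ ∑ z ∈ R.filter (fun z => hashXor n m a z = α), w z ∧
             (∑ z ∈ R.filter (fun z => hashXor n m a z = α), w z) ≤ 1 + (1 + κ) * pivot) ∧
            hashXor n m a y = α)).card : ℝ) /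
        (Fintype.card (Fin m → ZMod 2 × (Fin n → ZMod 2)) : ℝ) := by
  have hwR : ∀ z ∈ R, w z ∈ Set.Icc (0 : ℝ) 1 := fun z hz => Set.Ioc_subset_Icc_self (hw z hz)
  set p : ℝ := ((2 : ℝ) ^ m)⁻¹
  set S := univ.filter fun a : Fin m → ZMod 2 × (Fin n → ZMod 2) => hashXor n m a y = α
  have hp : p ∈ Set.Icc (0 : ℝ) 1 :=
    ⟨by positivity, inv_le_one_of_one_le₀ (one_le_pow₀ one_le_two)⟩
  have hpivot_ge : Real.exp (3 / 2) * (1 + 1 / κ) ^ 2 ≤ pivot := hpivot ▸ Int.le_ceil _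
  have hpivot1 : 1 ≤ pivot := by
    rw [hpivot]; exact_mod_cast Int.one_le_ceil_iff.mpr (by positivity)
  have hmean : p * ∑ z ∈ R.erase y, w z = pivot + p * (1 - w y) := by
    have hp2 : p * 2 ^ m = 1 := inv_mul_cancel₀ (by positivity)
    linear_combination p * add_sum_erase R w hy + p * hm + pivot * hp2
  have hvar : ∑ a ∈ S, (∑ z ∈ R.erase y with hashXor n m a z = α, w z -
      p * ∑ z ∈ R.erase y, w z) ^ 2 ≤ pivot * #S := by
    refine (sum_sq_sum_filter_hashXor_sub_le (notMem_erase y R)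
      (fun z hz => hwR z (mem_of_mem_erase hz)) α).trans ?_
    rw [hmean]
    gcongr
    exact one_sub_mul_add_mul_one_sub_le hp (hwR y hy) hpivot1
  rw [zpow_neg, zpow_natCast, le_div_iff₀ (by positivity)]
  calc (1 - Real.exp (-(3 / 2))) * p * Fintype.card (Fin m → ZMod 2 × (Fin n → ZMod 2))
      = (1 - Real.exp (-(3 / 2))) * #S := by rw [card_filter_hashXor_eq]; ring
    _ ≤ (1 - pivot / (κ / (1 + κ) * pivot) ^ 2) * #S := by
      gcongr
      rw [Real.exp_neg]
      exact div_sq_le_inv_of_mul_one_add_inv_sq_le (Real.exp_pos _) hκ0 hpivot_ge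
    _ ≤ _ := one_sub_div_sq_mul_card_le_card_filter_abs_sub_le S _ _ _ hvar (by positivity)
    _ ≤ _ := by
      refine Nat.cast_le.mpr (card_le_card fun a ha => ?_)
      simp only [S, mem_filter, mem_univ, true_and] at ha ⊢
      rw [hmean] at ha
      rw [sum_filter_eq_add_sum_filter_erase hy _ ha.1]
      exact ⟨add_mem_Icc_of_abs_sub_le (hwR y hy) hp hκ0 (by linarith) ha.2, ha.1⟩

/-- Lower bound for the probability that the random XOR hash cell of `α` has weight in
`[pivot/(1+κ), 1+(1+κ)·pivot]` and contains the fixed witness `y`. -/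
theorem hashXor_cell_witness_lower_bound
    (n m : ℕ) (hn : 1 ≤ n)
    (R : Finset (Fin n → ZMod 2)) (w : (Fin n → ZMod 2) → ℝ)
    (hw : ∀ z ∈ R, w z ∈ Set.Ioc (0 : ℝ) 1)
    (κ : ℝ) (hκ0 : 0 < κ) (hκ1 : κ < 1)
    (pivot : ℝ) (hpivot : pivot = (⌈Real.exp (3 / 2) * (1 + 1 / κ) ^ 2⌉ : ℝ))
    (hm : (∑ z ∈ R, w z) - 1 = (2 : ℝ) ^ m * pivot)
    (y : Fin n → ZMod 2) (hy : y ∈ R) (α : Fin m → ZMod 2) :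
    (1 - Real.exp (-(3 / 2))) * (2 : ℝ) ^ (-(m : ℤ)) ≤
      ((Finset.univ.filter
          (fun a : Fin m → ZMod 2 × (Fin n → ZMod 2) =>
            (pivot / (1 + κ) ≤ ∑ z ∈ R.filter (fun z => hashXor n m a z = α), w z ∧
             (∑ z ∈ R.filter (fun z => hashXor n m a z = α), w z) ≤ 1 + (1 + κ) * pivot) ∧
            hashXor n m a y = α)).card : ℝ) /
        (Fintype.card (Fin m → ZMod 2 × (Fin n → ZMod 2)) : ℝ) :=
  hashXor_cell_witness_lower_bound_general n m R w hw κ hκ0 pivot hpivot hm y hy α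
end
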